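/- Let X be a binomial random variable with parameters k and p, where 0 < p < 1/2. Then Pr(X ≥ k/2) ≤ ((1-p)/(1-2p)) · Pr(X = ⌈k/2⌉). -/

import Mathlib

/-! Past the mode, consecutive binomial probabilities shrink by at least the factor
`r = p / (1 - p) < 1`, since `C(k, j+1) ≤ C(k, j)` once `2j + 1 ≥ k`. The upper tail from
`⌈k/2⌉` is therefore dominated by a geometric series, summing to `(1 - r)⁻¹ = (1-p)/(1-2p)`
times its first term. -/

open Finset

/-- Point probability of a Binomial(k,p) random variable at j. -/
def binomP (k : ℕ) (p : ℝ) (j : ℕ) : ℝ := (k.choose j : ℝ) * p ^ j * (1 - p) ^ (k - j)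

section GeometricDecay

variable {K : Type*} [Field K] [LinearOrder K] [IsStrictOrderedRing K] {f : ℕ → K} {r : K}
  {m n : ℕ}

lemma le_pow_mul_of_succ_le_mul (hr : 0 ≤ r)
    (hstep : ∀ j, m ≤ j → j + 1 < n → f (j + 1) ≤ r * f j) :
    ∀ i, m + i < n → f (m + i) ≤ r ^ i * f m
  | 0, _ => by simp
  | i + 1, h => calc
      f (m + i + 1) ≤ r * f (m + i) := hstep _ (by omega) h
      _ ≤ r * (r ^ i * f m) :=
        mul_le_mul_of_nonneg_left (le_pow_mul_of_succ_le_mul hr hstep i (by omega)) hr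
      _ = r ^ (i + 1) * f m := by ring

lemma sum_Ico_le_div_of_succ_le_mul (hr0 : 0 ≤ r) (hr1 : r < 1) (hf : 0 ≤ f m)
    (hstep : ∀ j, m ≤ j → j + 1 < n → f (j + 1) ≤ r * f j) :
    ∑ j ∈ Ico m n, f j ≤ f m / (1 - r) := calc
  ∑ j ∈ Ico m n, f j = ∑ i ∈ range (n - m), f (m + i) := sum_Ico_eq_sum_range _ _ _
  _ ≤ ∑ i ∈ range (n - m), r ^ i * f m := sum_le_sum fun i hi =>
      le_pow_mul_of_succ_le_mul hr0 hstep i (by rw [mem_range] at hi; omega)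
  _ = (∑ i ∈ Ico 0 (n - m), r ^ i) * f m := by rw [range_eq_Ico, sum_mul]
  _ ≤ r ^ 0 / (1 - r) * f m := mul_le_mul_of_nonneg_right (geom_sum_Ico_le_of_lt_one hr0 hr1) hf
  _ = f m / (1 - r) := by ring

end GeometricDecay

lemma binomP_nonneg {k : ℕ} {p : ℝ} (hp0 : 0 ≤ p) (hp1 : p ≤ 1) (j : ℕ) : 0 ≤ binomP k p j := by
  have : 0 ≤ 1 - p := by linarith
  unfold binomP
  positivity

lemma binomP_succ_le {k j : ℕ} {p : ℝ} (hp0 : 0 ≤ p) (hp1 : p < 1) (hjk : j < k)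
    (hkj : k ≤ 2 * j + 1) : binomP k p (j + 1) ≤ p / (1 - p) * binomP k p j := by
  have hchoose : k.choose (j + 1) ≤ k.choose j := by
    refine Nat.le_of_mul_le_mul_right ?_ j.succ_pos
    rw [Nat.choose_succ_right_eq]
    exact Nat.mul_le_mul_left _ (by omega)
  have hq : 1 - p ≠ 0 := by linarith
  have hexp : k - j = k - (j + 1) + 1 := by omega
  unfold binomP
  rw [hexp, pow_succ]
  calc (k.choose (j + 1) : ℝ) * p ^ (j + 1) * (1 - p) ^ (k - (j + 1))
      ≤ k.choose j * p ^ (j + 1) * (1 - p) ^ (k - (j + 1)) := by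
        have : 0 ≤ 1 - p := by linarith
        gcongr
    _ = p / (1 - p) * (k.choose j * p ^ j * ((1 - p) ^ (k - (j + 1)) * (1 - p))) := by
        field_simp
        ring

/-- For X ~ Bin(k,p) with 0 < p < 1/2,
    Pr(X ≥ k/2) ≤ ((1-p)/(1-2p)) · Pr(X = ⌈k/2⌉). -/
theorem stmt_0 (k : ℕ) (p : ℝ) (hp0 : 0 < p) (hp : p < 1/2) :
    ∑ j ∈ (Finset.range (k+1)).filter (fun j => k ≤ 2*j), binomP k p j
      ≤ ((1 - p)/(1 - 2*p)) * binomP k p ((k+1)/2) := by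
  have hq : 0 < 1 - p := by linarith
  have hr0 : 0 ≤ p / (1 - p) := div_nonneg hp0.le hq.le
  have hr1 : p / (1 - p) < 1 := (div_lt_one hq).2 (by linarith)
  have htail : (range (k + 1)).filter (fun j => k ≤ 2 * j) = Ico ((k + 1) / 2) (k + 1) := by
    ext j
    simp only [mem_filter, mem_range, mem_Ico]
    omega
  have hfactor : binomP k p ((k + 1) / 2) / (1 - p / (1 - p))
      = (1 - p) / (1 - 2 * p) * binomP k p ((k + 1) / 2) := by
    have : 1 - 2 * p ≠ 0 := by linarith
    field_simp
    ring
  rw [htail, ← hfactor]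
  exact sum_Ico_le_div_of_succ_le_mul hr0 hr1 (binomP_nonneg hp0.le (by linarith) _)
    fun j hj hjk => binomP_succ_le hp0.le (by linarith) (by omega) (by omega)
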